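/- arXiv:1907.11966 — 3 statements merged into one kernel-verified Lean document; each statement's English description precedes it below -/
import Mathlib

section
/- Let β ≥ γ ≥ 0 with β + γ > 1 and β > 1. Then there is a constant C (depending only on β, γ) such that for all a₁, a₂ ∈ ℝ, ∫_ℝ dx / (⟨x - a₁⟩^β ⟨x - a₂⟩^γ) ≤ C ⟨a₁ - a₂⟩^{-γ}. -/
open MeasureTheory

noncomputable def jb (x : ℝ) : ℝ := Real.sqrt (1 + x ^ 2)

lemma jb_sq (x : ℝ) : jb x ^ 2 = 1 + x ^ 2 := Real.sq_sqrt (by positivity)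

lemma jb_nonneg (x : ℝ) : 0 ≤ jb x := Real.sqrt_nonneg _

lemma jb_one_le (x : ℝ) : 1 ≤ jb x := by
  nlinarith [jb_sq x, jb_nonneg x, sq_nonneg x]

lemma jb_pos (x : ℝ) : 0 < jb x := lt_of_lt_of_le one_pos (jb_one_le x)

lemma jb_mono {a x : ℝ} (h : |a| ≤ |x|) : jb a ≤ jb x := by
  nlinarith [jb_sq a, jb_sq x, jb_nonneg a, jb_nonneg x,
    mul_self_le_mul_self (abs_nonneg a) h, sq_abs a, sq_abs x]

lemma jb_le_two_mul {a x : ℝ} (h : |a| ≤ 2 * |x|) : jb a ≤ 2 * jb x := by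
  nlinarith [jb_sq a, jb_sq x, jb_pos a, jb_pos x,
    mul_self_le_mul_self (abs_nonneg a) h, sq_abs a, sq_abs x]

lemma key (β γ : ℝ) (hγ : 0 ≤ γ) (hβγ : γ ≤ β) (a₁ a₂ x : ℝ) :
    1 / (jb (x - a₁) ^ β * jb (x - a₂) ^ γ) ≤
      2 ^ γ * jb (a₁ - a₂) ^ (-γ) * (jb (x - a₁) ^ (-β) + jb (x - a₂) ^ (-β)) := by
  set A := jb (x - a₁) with hA
  set B := jb (x - a₂) with hB
  set D := jb (a₁ - a₂) with hD
  have hApos : 0 < A := jb_pos _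
  have hBpos : 0 < B := jb_pos _
  have hDpos : 0 < D := jb_pos _
  have hhalf : ∀ M : ℝ, 0 < M → (D / 2) ^ γ * M ^ β ≤ A ^ β * B ^ γ →
      1 / (A ^ β * B ^ γ) ≤ 2 ^ γ * D ^ (-γ) * M ^ (-β) := by
    intro M hM hle
    have h1 : 1 / (A ^ β * B ^ γ) ≤ 1 / ((D / 2) ^ γ * M ^ β) :=
      one_div_le_one_div_of_le (by positivity) hle
    refine h1.trans_eq ?_
    rw [Real.div_rpow hDpos.le (by norm_num), Real.rpow_neg hDpos.le, Real.rpow_neg hM.le]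
    have d1 : D ^ γ ≠ 0 := (Real.rpow_pos_of_pos hDpos γ).ne'
    have d2 : M ^ β ≠ 0 := (Real.rpow_pos_of_pos hM β).ne'
    have d3 : (2:ℝ) ^ γ ≠ 0 := (Real.rpow_pos_of_pos two_pos γ).ne'
    field_simp
  have hfinal : ∀ M : ℝ, M ^ (-β) ≤ A ^ (-β) + B ^ (-β) →
      2 ^ γ * D ^ (-γ) * M ^ (-β) ≤ 2 ^ γ * D ^ (-γ) * (A ^ (-β) + B ^ (-β)) := by
    intro M hM
    apply mul_le_mul_of_nonneg_left hM (by positivity)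
  rcases le_total (|x - a₁|) (|x - a₂|) with hAB | hAB
  · have hdist : |a₁ - a₂| ≤ 2 * |x - a₂| := by
      calc |a₁ - a₂| = |(x - a₂) - (x - a₁)| := by congr 1; ring
        _ ≤ |x - a₂| + |x - a₁| := abs_sub (x - a₂) (x - a₁)
        _ ≤ 2 * |x - a₂| := by linarith
    have hDB : D ≤ 2 * B := jb_le_two_mul hdist
    have hcore : (D / 2) ^ γ * A ^ β ≤ A ^ β * B ^ γ := by
      rw [mul_comm (A ^ β)]
      exact mul_le_mul_of_nonneg_right
        (Real.rpow_le_rpow (by positivity) (by linarith) hγ)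
        (Real.rpow_nonneg hApos.le β)
    exact (hhalf A hApos hcore).trans
      (hfinal A (le_add_of_nonneg_right (Real.rpow_nonneg hBpos.le _)))
  · have hBA : B ≤ A := jb_mono hAB
    have hdist : |a₁ - a₂| ≤ 2 * |x - a₁| := by
      calc |a₁ - a₂| = |(x - a₁) - (x - a₂)| := by rw [abs_sub_comm]; congr 1; ring
        _ ≤ |x - a₁| + |x - a₂| := abs_sub _ _
        _ ≤ 2 * |x - a₁| := by linarith
    have hDA : D ≤ 2 * A := jb_le_two_mul hdist
    have hcore : (D / 2) ^ γ * B ^ β ≤ A ^ β * B ^ γ := by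
      have hsplitA : A ^ β = A ^ γ * A ^ (β - γ) := by
        rw [← Real.rpow_add hApos]; congr 1; ring
      have hsplitB : B ^ β = B ^ γ * B ^ (β - γ) := by
        rw [← Real.rpow_add hBpos]; congr 1; ring
      have h1 : (D / 2) ^ γ ≤ A ^ γ :=
        Real.rpow_le_rpow (by positivity) (by linarith) hγ
      have h2 : B ^ (β - γ) ≤ A ^ (β - γ) :=
        Real.rpow_le_rpow hBpos.le hBA (by linarith)
      rw [hsplitA, hsplitB]
      calc (D / 2) ^ γ * (B ^ γ * B ^ (β - γ))
          ≤ A ^ γ * (B ^ γ * A ^ (β - γ)) := by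
            apply mul_le_mul h1
              (mul_le_mul_of_nonneg_left h2 (Real.rpow_nonneg hBpos.le γ))
              (by positivity) (by positivity)
        _ = A ^ γ * A ^ (β - γ) * B ^ γ := by ring
    exact (hhalf B hBpos hcore).trans
      (hfinal B (le_add_of_nonneg_left (Real.rpow_nonneg hApos.le _)))

lemma jb_integrable {β : ℝ} (hβ : 1 < β) : Integrable (fun x : ℝ => jb x ^ (-β)) := by
  have h : (fun x : ℝ => jb x ^ (-β)) = fun x : ℝ => ((1:ℝ) + ‖x‖ ^ 2) ^ (-β / 2) := by
    funext x
    rw [jb, Real.norm_eq_abs, sq_abs, Real.sqrt_eq_rpow,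
      ← Real.rpow_mul (by positivity)]
    congr 1; ring
  rw [h]
  apply integrable_rpow_neg_one_add_norm_sq
  simpa using hβ

lemma jb_integrable_shift {β : ℝ} (hβ : 1 < β) (a : ℝ) :
    Integrable (fun x : ℝ => jb (x - a) ^ (-β)) :=
  (jb_integrable hβ).comp_sub_right a

theorem stmt_1 (β γ : ℝ) (hγ : 0 ≤ γ) (hβγ : γ ≤ β) (hsum : 1 < β + γ) (hβ : 1 < β) :
    ∃ C : ℝ, ∀ a₁ a₂ : ℝ,
      ∫ x : ℝ, 1 / (jb (x - a₁) ^ β * jb (x - a₂) ^ γ) ≤ C * jb (a₁ - a₂) ^ (-γ) := by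
  set I : ℝ := ∫ x : ℝ, jb x ^ (-β) with hI
  refine ⟨2 ^ γ * (I + I), fun a₁ a₂ => ?_⟩
  have hint₁ := jb_integrable_shift hβ a₁
  have hint₂ := jb_integrable_shift hβ a₂
  have hbd : ∫ x : ℝ, 1 / (jb (x - a₁) ^ β * jb (x - a₂) ^ γ) ≤
      ∫ x : ℝ, 2 ^ γ * jb (a₁ - a₂) ^ (-γ) * (jb (x - a₁) ^ (-β) + jb (x - a₂) ^ (-β)) := by
    apply integral_mono_of_nonneg
    · filter_upwards with x
      have := jb_pos (x - a₁); have := jb_pos (x - a₂)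
      positivity
    · exact (hint₁.add hint₂).const_mul _
    · filter_upwards with x
      exact key β γ hγ hβγ a₁ a₂ x
  refine hbd.trans_eq ?_
  rw [integral_const_mul, integral_add hint₁ hint₂]
  have e₁ : ∫ x : ℝ, jb (x - a₁) ^ (-β) = I :=
    integral_sub_right_eq_self (fun x => jb x ^ (-β)) a₁
  have e₂ : ∫ x : ℝ, jb (x - a₂) ^ (-β) = I :=
    integral_sub_right_eq_self (fun x => jb x ^ (-β)) a₂
  rw [e₁, e₂]
  ring
end

section
/- Let γ ∈ (1/4, 1/2). Then there is a constant C (depending only on γ) such that for every c ≥ 1/4, ∫_0^∞ dη / (√η · ⟨η - c⟩^{2γ}) ≤ C · c^{(1-4γ)/2}. In particular, setting c = ξ²/4 with ξ ≥ 1, the integral is bounded by C' ξ^{1-4γ}. -/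
open MeasureTheory

/-!
Since `⟨x⟩ ≥ |x|`, the integrand is dominated by the power weight `η^{-1/2} |η - c|^{-2γ}`.
The substitution `η = c t` shows that the integral of this weight is `c^{1/2 - 2γ}` times its
value at `c = 1`, which is finite: the singularities `t^{-1/2}` at `0` and `|t - 1|^{-2γ}` at `1`
are integrable since `2γ < 1`, and the decay `t^{-1/2-2γ}` at infinity is integrable since
`γ > 1/4`.
-/

open Real Set

lemma abs_le_jb (x : ℝ) : |x| ≤ jb x := by
  rw [← sqrt_sq_eq_abs]
  exact sqrt_le_sqrt (by linarith)

lemma intervalIntegrable_abs_rpow {r : ℝ} (hr : -1 < r) (a b : ℝ) :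
    IntervalIntegrable (fun x : ℝ => |x| ^ r) volume a b := by
  have from_zero_of_nonneg :
      ∀ c, 0 ≤ c → IntervalIntegrable (fun x : ℝ => |x| ^ r) volume 0 c :=
    fun c hc => (intervalIntegral.intervalIntegrable_rpow' hr).congr fun x hx => by
      rw [uIoc_of_le hc] at hx
      simp only [abs_of_pos hx.1]
  have from_zero : ∀ c, IntervalIntegrable (fun x : ℝ => |x| ^ r) volume 0 c := by
    intro c
    rcases le_total 0 c with hc | hc
    · exact from_zero_of_nonneg c hc
    · have hneg := from_zero_of_nonneg (-c) (by linarith)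
      rw [IntervalIntegrable.iff_comp_neg] at hneg
      simpa using hneg
  exact (from_zero a).symm.trans (from_zero b)

noncomputable def powerWeight (a b c η : ℝ) : ℝ := η ^ (-a) * |η - c| ^ (-b)

lemma measurable_powerWeight (a b c : ℝ) : Measurable (powerWeight a b c) := by
  unfold powerWeight; fun_prop

lemma powerWeight_mul_left {a b c t : ℝ} (hc : 0 < c) (ht : 0 ≤ t) :
    powerWeight a b c (c * t) = c ^ (-(a + b)) * powerWeight a b 1 t := by
  have hdist : |c * t - c| = c * |t - 1| := by
    rw [← mul_sub_one, abs_mul, abs_of_pos hc]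
  rw [powerWeight, powerWeight, hdist, mul_rpow hc.le ht, mul_rpow hc.le (abs_nonneg _),
    neg_add, rpow_add hc]
  ring

lemma integrableOn_powerWeight_one {a b : ℝ} (ha : a < 1) (hb : b < 1) (hab : 1 < a + b) :
    IntegrableOn (powerWeight a b 1) (Ioi 0) := by
  have hb0 : 0 < b := by linarith
  have near_zero : IntegrableOn (powerWeight a b 1) (Ioc 0 (1/2)) := by
    refine IntegrableOn.mul_continuousOn_of_subset ?_ ?_ measurableSet_Ioc isCompact_Icc
      Ioc_subset_Icc_self
    · exact (intervalIntegral.intervalIntegrable_rpow' (r := -a) (by linarith)).1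
    · refine ((continuous_id.sub continuous_const).abs.continuousOn).rpow_const fun t ht => ?_
      exact Or.inl (abs_pos.2 (show t - 1 ≠ 0 by linarith [ht.2])).ne'
  have near_one : IntegrableOn (powerWeight a b 1) (Ioc (1/2) 2) := by
    refine IntegrableOn.continuousOn_mul_of_subset ?_ ?_ isCompact_Icc measurableSet_Ioc
      Ioc_subset_Icc_self
    · exact continuousOn_id.rpow_const fun t ht => Or.inl (show t ≠ 0 by linarith [ht.1])
    · have hshift := (intervalIntegrable_abs_rpow (r := -b) (by linarith) (1/2 - 1) (2 - 1))
        |>.comp_sub_right 1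
      norm_num at hshift
      exact hshift.1
  have near_infinity : IntegrableOn (powerWeight a b 1) (Ioi 2) := by
    refine ((integrableOn_Ioi_rpow_of_lt (a := -(a + b)) (by linarith) two_pos).const_mul
      (2 ^ b)).mono' (measurable_powerWeight a b 1).aestronglyMeasurable ?_
    refine (ae_restrict_iff' measurableSet_Ioi).2 (Filter.Eventually.of_forall fun t ht => ?_)
    have ht : 2 < t := ht
    have hdist : t / 2 ≤ |t - 1| := by rw [abs_of_pos (by linarith)]; linarith
    calc ‖powerWeight a b 1 t‖ = t ^ (-a) * |t - 1| ^ (-b) := by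
          rw [Real.norm_of_nonneg (by unfold powerWeight; positivity), powerWeight]
      _ ≤ t ^ (-a) * (t / 2) ^ (-b) := by
          refine mul_le_mul_of_nonneg_left ?_ (by positivity)
          exact rpow_le_rpow_of_nonpos (by linarith) hdist (neg_nonpos.2 hb0.le)
      _ = 2 ^ b * t ^ (-(a + b)) := by
          rw [div_rpow (by positivity) two_pos.le, rpow_neg two_pos.le, neg_add,
            rpow_add (by positivity)]
          field_simp
  have h12 : Ioc (0:ℝ) (1/2) ∪ Ioc (1/2) 2 = Ioc 0 2 :=
    Ioc_union_Ioc_eq_Ioc (by norm_num) (by norm_num)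
  rw [← Ioc_union_Ioi_eq_Ioi zero_le_two, ← h12]
  exact (near_zero.union near_one).union near_infinity

lemma integrableOn_powerWeight {a b c : ℝ} (ha : a < 1) (hb : b < 1) (hab : 1 < a + b)
    (hc : 0 < c) : IntegrableOn (powerWeight a b c) (Ioi 0) := by
  have hscaled : IntegrableOn (fun t => powerWeight a b c (c * t)) (Ioi 0) :=
    IntegrableOn.congr_fun ((integrableOn_powerWeight_one ha hb hab).const_mul (c ^ (-(a + b))))
      (fun t ht => (powerWeight_mul_left hc (le_of_lt ht)).symm) measurableSet_Ioi
  simpa using (integrableOn_Ioi_comp_mul_left_iff (powerWeight a b c) 0 hc).1 hscaled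

lemma integral_powerWeight (a b : ℝ) {c : ℝ} (hc : 0 < c) :
    ∫ η in Ioi 0, powerWeight a b c η
      = c ^ (1 - a - b) * ∫ t in Ioi 0, powerWeight a b 1 t := by
  have hscaled : ∫ t in Ioi 0, powerWeight a b c (c * t)
      = c ^ (-(a + b)) * ∫ t in Ioi 0, powerWeight a b 1 t := by
    rw [← integral_const_mul]
    exact setIntegral_congr_fun measurableSet_Ioi fun t ht => powerWeight_mul_left hc (le_of_lt ht)
  have hchange := integral_comp_mul_left_Ioi' (powerWeight a b c) 0 hc
  rw [mul_zero, smul_eq_mul, hscaled] at hchange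
  rw [← hchange, ← mul_assoc, show 1 - a - b = 1 + -(a + b) by ring, rpow_add hc, rpow_one]

lemma one_div_sqrt_mul_jb_rpow_le_powerWeight {γ c η : ℝ} (hγ : 0 ≤ γ) (hη : 0 < η)
    (hηc : η ≠ c) :
    1 / (√η * jb (η - c) ^ (2 * γ)) ≤ powerWeight (1/2) (2 * γ) c η := by
  have hdist : 0 < |η - c| := abs_pos.2 (sub_ne_zero.2 hηc)
  rw [powerWeight, rpow_neg hη.le, rpow_neg hdist.le, ← sqrt_eq_rpow, ← mul_inv, ← one_div]
  refine one_div_le_one_div_of_le (by positivity) ?_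
  exact mul_le_mul_of_nonneg_left (rpow_le_rpow hdist.le (abs_le_jb _) (by linarith))
    (sqrt_nonneg η)

lemma integral_one_div_sqrt_mul_jb_rpow_le {γ c : ℝ} (hγ : γ ∈ Ioo (1/4 : ℝ) (1/2))
    (hc : 0 < c) :
    ∫ η in Ioi 0, 1 / (√η * jb (η - c) ^ (2 * γ))
      ≤ (∫ t in Ioi 0, powerWeight (1/2) (2 * γ) 1 t) * c ^ ((1 - 4 * γ) / 2) := by
  obtain ⟨hγ₁, hγ₂⟩ := hγ
  have hle : ∀ᵐ η ∂volume.restrict (Ioi 0),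
      1 / (√η * jb (η - c) ^ (2 * γ)) ≤ powerWeight (1/2) (2 * γ) c η := by
    filter_upwards [ae_restrict_mem measurableSet_Ioi,
      ae_restrict_of_ae (Measure.ae_ne volume c)] with η hη hηc
    exact one_div_sqrt_mul_jb_rpow_le_powerWeight (by linarith) hη hηc
  calc ∫ η in Ioi 0, 1 / (√η * jb (η - c) ^ (2 * γ))
      ≤ ∫ η in Ioi 0, powerWeight (1/2) (2 * γ) c η :=
        integral_mono_of_nonneg (Filter.Eventually.of_forall fun η => by unfold jb; positivity)
          (integrableOn_powerWeight (by norm_num) (by linarith) (by linarith) hc) hle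
    _ = _ := by
        rw [integral_powerWeight _ _ hc, mul_comm]
        ring_nf

theorem stmt_4 (γ : ℝ) (hγ : γ ∈ Set.Ioo (1/4 : ℝ) (1/2 : ℝ)) :
    (∃ C : ℝ, ∀ c : ℝ, 1/4 ≤ c →
      ∫ η in Set.Ioi (0:ℝ), 1 / (Real.sqrt η * jb (η - c) ^ (2 * γ))
        ≤ C * c ^ ((1 - 4 * γ) / 2)) ∧
    ∃ C' : ℝ, ∀ ξ : ℝ, 1 ≤ ξ →
      ∫ η in Set.Ioi (0:ℝ), 1 / (Real.sqrt η * jb (η - ξ ^ 2 / 4) ^ (2 * γ))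
        ≤ C' * ξ ^ (1 - 4 * γ) := by
  set C := ∫ t in Ioi 0, powerWeight (1/2) (2 * γ) 1 t
  refine ⟨⟨C, fun c hc => integral_one_div_sqrt_mul_jb_rpow_le hγ (by linarith)⟩,
    C / 4 ^ ((1 - 4 * γ) / 2), fun ξ hξ => ?_⟩
  have hξ0 : 0 < ξ := by linarith
  calc _ ≤ C * (ξ ^ 2 / 4) ^ ((1 - 4 * γ) / 2) :=
        integral_one_div_sqrt_mul_jb_rpow_le hγ (by positivity)
    _ = C / 4 ^ ((1 - 4 * γ) / 2) * ξ ^ (1 - 4 * γ) := by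
        rw [div_rpow (by positivity) (by norm_num), ← rpow_two, ← rpow_mul hξ0.le]
        ring_nf
end

section
/- Suppose a family of bounded operators U(t) on function spaces over ℝ satisfies, for 0 < |t| ≤ δ: ‖U(t)f‖_{L^∞} ≤ c|t|^{-1/2}‖f‖_{L¹}, ‖U(t)f‖_{L²} = ‖f‖_{L²}, U(t) is invertible with inverse U(-t), and both U(t), U(-t) are bounded on L^p(ℝ) for some p ∈ (2, ∞]. Then the inequality ‖f‖_{L^p} ≲ |t|^{-(1/p' - 1/p)/2·1}‖f‖_{L^{p'}} holds for all Schwartz f (with 1/p' + 1/p = 1), which contradicts the failure of the embedding L^{p'}(ℝ) ↪ L^p(ℝ); hence no such p > 2 exists and U(t) is L^p-bounded (with bounded inverse, under these dispersive hypotheses) only for p = 2. -/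
/-!
Apply the hypotheses at the single time `t = δ`. For `f ∈ L¹ ∩ L²`, interpolating between the
dispersive `L¹ → L^∞` bound and `L²`-unitarity gives
`‖U δ f‖_p ≤ ‖U δ f‖_∞^(1 - 2/p) ‖U δ f‖₂^(2/p) ≲ ‖f‖₁^(1 - 2/p) ‖f‖₂^(2/p)`,
and `L^p`-boundedness of the inverse `U (-δ)` turns this into a bound on `‖f‖_p`.
For the indicator of a set of measure `m` this reads `m^(1/p) ≲ m^(1 - 2/p) m^(1/p)`,
which fails as `m → 0` since `p > 2`.
-/

open MeasureTheory ENNReal Filter Topology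

section

variable {α E : Type*} [MeasurableSpace α] {μ : Measure α}

theorem eLpNorm_ofReal_le_eLpNorm_top_rpow_mul_eLpNorm_rpow [NormedAddCommGroup E] {q p : ℝ}
    (hq : 0 < q) (hqp : q ≤ p) (g : α → E) (hg : eLpNorm g ⊤ μ ≠ ⊤) :
    eLpNorm g (ENNReal.ofReal p) μ
      ≤ eLpNorm g ⊤ μ ^ (1 - q / p) * eLpNorm g (ENNReal.ofReal q) μ ^ (q / p) := by
  have hp : 0 < p := hq.trans_le hqp
  set M := eLpNorm g ⊤ μ
  have hpointwise : ∀ᵐ x ∂μ, ‖g x‖ₑ ^ p ≤ M ^ (p - q) * ‖g x‖ₑ ^ q := by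
    filter_upwards [enorm_ae_le_eLpNormEssSup g μ] with x hx
    rw [← eLpNorm_exponent_top] at hx
    calc ‖g x‖ₑ ^ p = ‖g x‖ₑ ^ (p - q) * ‖g x‖ₑ ^ q := by
          rw [← ENNReal.rpow_add_of_nonneg _ _ (by linarith) hq.le, sub_add_cancel]
      _ ≤ M ^ (p - q) * ‖g x‖ₑ ^ q := by gcongr
  have hintegral : ∫⁻ x, ‖g x‖ₑ ^ p ∂μ ≤ M ^ (p - q) * ∫⁻ x, ‖g x‖ₑ ^ q ∂μ :=
    (lintegral_mono_ae hpointwise).trans_eq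
      (lintegral_const_mul' _ _ (rpow_ne_top_of_nonneg (by linarith) hg))
  rw [eLpNorm_eq_lintegral_rpow_enorm_toReal (by simpa using hp) ofReal_ne_top,
    eLpNorm_eq_lintegral_rpow_enorm_toReal (by simpa using hq) ofReal_ne_top,
    toReal_ofReal hp.le, toReal_ofReal hq.le, ← rpow_mul]
  calc (∫⁻ x, ‖g x‖ₑ ^ p ∂μ) ^ (1 / p)
      ≤ (M ^ (p - q) * ∫⁻ x, ‖g x‖ₑ ^ q ∂μ) ^ (1 / p) := by gcongr
    _ = M ^ (1 - q / p) * (∫⁻ x, ‖g x‖ₑ ^ q ∂μ) ^ (1 / q * (q / p)) := by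
      rw [mul_rpow_of_nonneg _ _ (by positivity), ← rpow_mul]
      congr 2 <;> field_simp

theorem eLpNorm_le_of_dispersive [NormedAddCommGroup E] {T S : (α → E) → (α → E)}
    {A C : ℝ≥0∞} {p : ℝ} (hp : 2 ≤ p) (hA : A ≠ ⊤)
    (hdisp : ∀ f, eLpNorm (T f) ⊤ μ ≤ A * eLpNorm f 1 μ)
    (hunit : ∀ f, eLpNorm (T f) 2 μ = eLpNorm f 2 μ) (hinv : ∀ f, S (T f) = f)
    (hS : ∀ g, eLpNorm (S g) (ENNReal.ofReal p) μ ≤ C * eLpNorm g (ENNReal.ofReal p) μ)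
    (f : α → E) (hf : eLpNorm f 1 μ ≠ ⊤) :
    eLpNorm f (ENNReal.ofReal p) μ
      ≤ C * (A * eLpNorm f 1 μ) ^ (1 - 2 / p) * eLpNorm f 2 μ ^ (2 / p) := by
  have hθ : 0 ≤ 1 - 2 / p := by
    rw [sub_nonneg, div_le_one (by linarith)]
    exact hp
  have hTf : eLpNorm (T f) ⊤ μ ≠ ⊤ := ne_top_of_le_ne_top (mul_ne_top hA hf) (hdisp f)
  have hinterp := eLpNorm_ofReal_le_eLpNorm_top_rpow_mul_eLpNorm_rpow two_pos hp (T f) hTf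
  rw [ofReal_ofNat, hunit] at hinterp
  calc eLpNorm f (ENNReal.ofReal p) μ = eLpNorm (S (T f)) (ENNReal.ofReal p) μ := by rw [hinv]
    _ ≤ C * eLpNorm (T f) (ENNReal.ofReal p) μ := hS _
    _ ≤ C * ((A * eLpNorm f 1 μ) ^ (1 - 2 / p) * eLpNorm f 2 μ ^ (2 / p)) := by
      gcongr
      exact hinterp.trans (by gcongr; exact hdisp f)
    _ = C * (A * eLpNorm f 1 μ) ^ (1 - 2 / p) * eLpNorm f 2 μ ^ (2 / p) := (mul_assoc ..).symm

theorem one_le_mul_rpow_measure_of_dispersive {T S : (α → ℂ) → (α → ℂ)} {A C : ℝ≥0∞} {p : ℝ}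
    (hp : 2 ≤ p) (hA : A ≠ ⊤) (hdisp : ∀ f, eLpNorm (T f) ⊤ μ ≤ A * eLpNorm f 1 μ)
    (hunit : ∀ f, eLpNorm (T f) 2 μ = eLpNorm f 2 μ) (hinv : ∀ f, S (T f) = f)
    (hS : ∀ g, eLpNorm (S g) (ENNReal.ofReal p) μ ≤ C * eLpNorm g (ENNReal.ofReal p) μ)
    {s : Set α} (hs : MeasurableSet s) (hs₀ : μ s ≠ 0) (hs_top : μ s ≠ ⊤) :
    1 ≤ C * (A * μ s) ^ (1 - 2 / p) := by
  have hp₀ : 0 < p := by linarith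
  have hnorm : ∀ r : ℝ, 0 < r →
      eLpNorm (s.indicator fun _ => (1 : ℂ)) (ENNReal.ofReal r) μ = μ s ^ (1 / r) := fun r hr ↦ by
    rw [eLpNorm_indicator_const hs (by simpa using hr) ofReal_ne_top, toReal_ofReal hr.le]
    simp
  have h := eLpNorm_le_of_dispersive hp hA hdisp hunit hinv hS (s.indicator fun _ => (1 : ℂ))
  rw [← ofReal_one, ← ofReal_ofNat 2, hnorm p hp₀, hnorm 1 one_pos, hnorm 2 two_pos,
    ← rpow_mul, div_one, rpow_one, one_div_mul_eq_div, div_div_cancel_left' two_ne_zero] at h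
  refine (ENNReal.mul_le_mul_iff_left (c := μ s ^ (1 / p)) ?_ ?_).mp ?_
  · simp [hs₀, hp₀.le]
  · exact rpow_ne_top_of_nonneg (by positivity) hs_top
  · simpa using h hs_top

end

theorem le_two_of_dispersive {T S : (ℝ → ℂ) → (ℝ → ℂ)} {A C : ℝ≥0∞} {p : ℝ} (hA : A ≠ ⊤)
    (hC : C ≠ ⊤) (hdisp : ∀ f, eLpNorm (T f) ⊤ volume ≤ A * eLpNorm f 1 volume)
    (hunit : ∀ f, eLpNorm (T f) 2 volume = eLpNorm f 2 volume) (hinv : ∀ f, S (T f) = f)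
    (hS : ∀ g, eLpNorm (S g) (ENNReal.ofReal p) volume
      ≤ C * eLpNorm g (ENNReal.ofReal p) volume) :
    p ≤ 2 := by
  by_contra! hp
  have hθ : 0 < 1 - 2 / p := by
    rw [sub_pos, div_lt_one (by linarith)]
    exact hp
  have hsmall : Tendsto (fun m ↦ C * (A * m) ^ (1 - 2 / p)) (𝓝 0) (𝓝 0) := by
    simp_rw [mul_rpow_of_nonneg _ _ hθ.le, ← mul_assoc]
    exact tendsto_const_mul_rpow_nhds_zero_of_pos
      (mul_ne_top hC (rpow_ne_top_of_nonneg hθ.le hA)) hθ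
  have hvol : Tendsto (fun R : ℝ ↦ volume (Set.Ioc 0 R)) (𝓝[>] 0) (𝓝 0) := by
    simpa using (ENNReal.continuous_ofReal.tendsto 0).mono_left nhdsWithin_le_nhds
  obtain ⟨R, hlt, hR⟩ :=
    ((hsmall.comp hvol).eventually (gt_mem_nhds one_pos)).and self_mem_nhdsWithin |>.exists
  refine (one_le_mul_rpow_measure_of_dispersive hp.le hA hdisp hunit hinv hS measurableSet_Ioc
    ?_ measure_Ioc_lt_top.ne).not_gt hlt
  simpa using hR

theorem stmt_13_general (U : ℝ → (ℝ → ℂ) → (ℝ → ℂ)) (δ c : ℝ) (hδ : 0 < δ)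
    (hdisp : ∀ t : ℝ, 0 < |t| → |t| ≤ δ → ∀ f : ℝ → ℂ,
      eLpNorm (U t f) ⊤ volume ≤ ENNReal.ofReal (c * |t| ^ (-(1/2 : ℝ))) * eLpNorm f 1 volume)
    (hunit : ∀ t : ℝ, 0 < |t| → |t| ≤ δ → ∀ f : ℝ → ℂ,
      eLpNorm (U t f) 2 volume = eLpNorm f 2 volume)
    (hinv : ∀ t : ℝ, 0 < |t| → |t| ≤ δ → ∀ f : ℝ → ℂ, U (-t) (U t f) = f)
    (p : ℝ) (hp : 2 < p)
    (hbdd : ∃ Cp : ℝ, ∀ t : ℝ, 0 < |t| → |t| ≤ δ → ∀ f : ℝ → ℂ,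
      eLpNorm (U t f) (ENNReal.ofReal p) volume
        ≤ ENNReal.ofReal Cp * eLpNorm f (ENNReal.ofReal p) volume ∧
      eLpNorm (U (-t) f) (ENNReal.ofReal p) volume
        ≤ ENNReal.ofReal Cp * eLpNorm f (ENNReal.ofReal p) volume) :
    False := by
  obtain ⟨Cp, hCp⟩ := hbdd
  have hδ₀ : 0 < |δ| := abs_pos_of_pos hδ
  have hδ₁ : |δ| ≤ δ := (abs_of_pos hδ).le
  exact hp.not_ge <| le_two_of_dispersive ofReal_ne_top ofReal_ne_top (hdisp δ hδ₀ hδ₁)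
    (hunit δ hδ₀ hδ₁) (hinv δ hδ₀ hδ₁) fun g ↦ (hCp δ hδ₀ hδ₁ g).2

theorem stmt_13 (U : ℝ → (ℝ → ℂ) → (ℝ → ℂ)) (δ c : ℝ) (hδ : 0 < δ) (hc : 0 < c)
    (hdisp : ∀ t : ℝ, 0 < |t| → |t| ≤ δ → ∀ f : ℝ → ℂ,
      eLpNorm (U t f) ⊤ volume ≤ ENNReal.ofReal (c * |t| ^ (-(1/2 : ℝ))) * eLpNorm f 1 volume)
    (hunit : ∀ t : ℝ, 0 < |t| → |t| ≤ δ → ∀ f : ℝ → ℂ,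
      eLpNorm (U t f) 2 volume = eLpNorm f 2 volume)
    (hinv : ∀ t : ℝ, 0 < |t| → |t| ≤ δ → ∀ f : ℝ → ℂ, U (-t) (U t f) = f)
    (p : ℝ) (hp : 2 < p)
    (hbdd : ∃ Cp : ℝ, ∀ t : ℝ, 0 < |t| → |t| ≤ δ → ∀ f : ℝ → ℂ,
      eLpNorm (U t f) (ENNReal.ofReal p) volume
        ≤ ENNReal.ofReal Cp * eLpNorm f (ENNReal.ofReal p) volume ∧
      eLpNorm (U (-t) f) (ENNReal.ofReal p) volume
        ≤ ENNReal.ofReal Cp * eLpNorm f (ENNReal.ofReal p) volume) :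
    False :=
  stmt_13_general U δ c hδ hdisp hunit hinv p hp hbdd
end
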